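/- arXiv:1203.3051 — 2 statements merged into one kernel-verified Lean document; each statement's English description precedes it below -/
import Mathlib

section
/- Let X_1,…,X_k be voting rules and T a tie-breaking mechanism on a finite candidate set C. If at least one X_j satisfies the majority criterion and T satisfies the majority criterion, then the combined rule X_1+⋯+X_k satisfies the majority criterion: for every nonempty S ⊆ C and every profile P on S in which strictly more than half of the votes rank the same candidate w ∈ S first, the combined rule elects w. -/
/-
Framework: a finite candidate set `C`. A vote on a nonempty `S ⊆ C` is a strict
linear order on `S`, encoded as a duplicate-free list enumerating `S` (earlier =
more preferred); a profile on `S` is a finite list of such votes. A voting rule /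
tie-breaking mechanism is a function assigning to every `(S, P)` a candidate,
required to lie in `S` when `S` is nonempty. The combined rule `X_1 + ⋯ + X_k`
(with tie-breaking `T`) is defined by the recursive run-off construction.
-/

variable {C : Type*}

/-- The type of (total) choice functions, used both for voting rules and
tie-breaking mechanisms. -/
abbrev Rule (C : Type*) := Finset C → List (List C) → C

/-- `R` is a genuine voting rule (or tie-breaking mechanism): it always picks a
member of the given nonempty candidate set. -/
def IsRule [DecidableEq C] (R : Rule C) : Prop := ∀ S P, S.Nonempty → R S P ∈ S

/-- `v` is a vote on `S`: a strict linear order of the members of `S`. -/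
def VoteOn [DecidableEq C] (S : Finset C) (v : List C) : Prop := v.Nodup ∧ v.toFinset = S

/-- `P` is a profile on `S`. -/
def ProfileOn [DecidableEq C] (S : Finset C) (P : List (List C)) : Prop := ∀ v ∈ P, VoteOn S v

/-- Restriction `P|_W` of a profile to a subset `W` of candidates. -/
def restrictProfile [DecidableEq C] (W : Finset C) (P : List (List C)) : List (List C) :=
  P.map fun v => v.filter (fun x => x ∈ W)

/-- The combined rule `X_0 + ⋯ + X_k` with tie-breaking mechanism `T`:
collect the set `W` of winners of the base rules; if `W` is a singleton, that
candidate wins; if `W = S`, the tie-breaking mechanism decides; otherwise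
recurse on `(W, P|_W)`. (The final `else` branch is unreachable for genuine
voting rules, since then `W ⊆ S` always holds.) -/
def combined [DecidableEq C] {k : ℕ} (X : Fin (k + 1) → Rule C) (T : Rule C) :
    Finset C → List (List C) → C
  | S, P =>
    let W : Finset C := Finset.image (fun j => X j S P) Finset.univ
    if W.card = 1 then X 0 S P
    else if W = S then T S P
    else if h : W ⊂ S then combined X T W (restrictProfile W P)
    else T S P
  termination_by S _ => S.card
  decreasing_by exact Finset.card_lt_card h

/-- `R` satisfies the majority criterion: whenever strictly more than half of
the votes of a profile on `S` rank the same candidate `w ∈ S` first, `R`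
elects `w`. -/
def MajorityCriterion [DecidableEq C] (R : Rule C) : Prop :=
  ∀ (S : Finset C) (P : List (List C)) (w : C),
    S.Nonempty → ProfileOn S P → w ∈ S →
    2 * (P.filter (fun v => v.head? = some w)).length > P.length → R S P = w

/-!
The winner `w` of a strict majority is among the winners `W` of the base rules, because one of
them satisfies the majority criterion. Restricting the profile to `W ∋ w` keeps every vote that
ranks `w` first ranking `w` first, so `w` is still a strict majority winner on `W`. Hence either
`W = {w}`, or the tie-breaking mechanism elects `w` on `S`, or we conclude by strong induction on
the candidate set.
-/

theorem List.head?_filter_of_head?_eq {α : Type*} {p : α → Bool} {v : List α} {w : α}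
    (hv : v.head? = some w) (hw : p w) : (v.filter p).head? = some w := by
  cases v with
  | nil => simp at hv
  | cons a t =>
    obtain rfl : a = w := by simpa using hv
    simp [hw]

section Combined

variable [DecidableEq C]

theorem VoteOn.filter_mem {S W : Finset C} {v : List C} (hv : VoteOn S v) (hWS : W ⊆ S) :
    VoteOn W (v.filter (· ∈ W)) := by
  refine ⟨hv.1.filter _, ?_⟩
  rw [List.toFinset_filter, hv.2]
  simpa using Finset.filter_mem_eq_inter.trans (Finset.inter_eq_right.mpr hWS)

theorem ProfileOn.restrictProfile {S W : Finset C} {P : List (List C)} (hP : ProfileOn S P)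
    (hWS : W ⊆ S) : ProfileOn W (restrictProfile W P) := by
  simp only [ProfileOn, _root_.restrictProfile, List.mem_map, forall_exists_index, and_imp,
    forall_apply_eq_imp_iff₂]
  exact fun v hv => (hP v hv).filter_mem hWS

theorem length_restrictProfile (W : Finset C) (P : List (List C)) :
    (restrictProfile W P).length = P.length :=
  List.length_map _

theorem length_filter_head?_le_restrictProfile {W : Finset C} {w : C} (hw : w ∈ W)
    (P : List (List C)) :
    (P.filter (fun v => v.head? = some w)).length ≤
      ((restrictProfile W P).filter (fun v => v.head? = some w)).length := by
  simp only [restrictProfile, ← List.countP_eq_length_filter, List.countP_map]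
  refine List.countP_mono_left fun v _ hv => ?_
  simpa using List.head?_filter_of_head?_eq (by simpa using hv) (by simpa using hw)

theorem majority_restrictProfile {W : Finset C} {w : C} (hw : w ∈ W) {P : List (List C)}
    (hmaj : 2 * (P.filter (fun v => v.head? = some w)).length > P.length) :
    2 * ((restrictProfile W P).filter (fun v => v.head? = some w)).length >
      (restrictProfile W P).length := by
  have := length_filter_head?_le_restrictProfile hw P
  rw [length_restrictProfile]
  omega

variable {k : ℕ} (X : Fin (k + 1) → Rule C) (T : Rule C)

def baseWinners (S : Finset C) (P : List (List C)) : Finset C :=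
  Finset.univ.image fun j => X j S P

theorem combined_eq (S : Finset C) (P : List (List C)) :
    combined X T S P =
      if (baseWinners X S P).card = 1 then X 0 S P
      else if baseWinners X S P = S then T S P
      else if baseWinners X S P ⊂ S then
        combined X T (baseWinners X S P) (restrictProfile (baseWinners X S P) P)
      else T S P := by
  rw [combined]
  rfl

theorem mem_baseWinners (j : Fin (k + 1)) (S : Finset C) (P : List (List C)) :
    X j S P ∈ baseWinners X S P :=
  Finset.mem_image_of_mem _ (Finset.mem_univ j)

variable {X}

theorem baseWinners_subset (hX : ∀ j, IsRule (X j)) {S : Finset C} (hS : S.Nonempty)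
    (P : List (List C)) : baseWinners X S P ⊆ S := by
  simp only [baseWinners, Finset.image_subset_iff, Finset.mem_univ, forall_const]
  exact fun j => hX j S P hS

end Combined

theorem combined_majority_general [DecidableEq C] {k : ℕ}
    (X : Fin (k + 1) → Rule C) (T : Rule C)
    (hX : ∀ j, IsRule (X j))
    (hM : ∃ j, MajorityCriterion (X j)) (hTM : MajorityCriterion T) :
    MajorityCriterion (combined X T) := by
  obtain ⟨j, hj⟩ := hM
  intro S
  induction S using Finset.strongInduction with
  | H S ih =>
    intro P w hS hP hw hmaj
    set W := baseWinners X S P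
    have hWS : W ⊆ S := baseWinners_subset hX hS P
    have hwW : w ∈ W := hj S P w hS hP hw hmaj ▸ mem_baseWinners X j S P
    rw [combined_eq]
    split_ifs with hsingle hfull hssub
    · exact Finset.card_le_one.mp hsingle.le _ (mem_baseWinners X 0 S P) _ hwW
    · exact hTM S P w hS hP hw hmaj
    · exact ih W hssub _ w ⟨w, hwW⟩ (hP.restrictProfile hWS) hwW
        (majority_restrictProfile hwW hmaj)
    · exact absurd (hWS.ssubset_of_ne hfull) hssub

/-- If at least one of the base voting rules satisfies the majority criterion
and the tie-breaking mechanism satisfies the majority criterion, then the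
combined rule `X_0 + ⋯ + X_k` satisfies the majority criterion. -/
theorem combined_majority [DecidableEq C] [Fintype C] {k : ℕ}
    (X : Fin (k + 1) → Rule C) (T : Rule C)
    (hX : ∀ j, IsRule (X j)) (hT : IsRule T)
    (hM : ∃ j, MajorityCriterion (X j)) (hTM : MajorityCriterion T) :
    MajorityCriterion (combined X T) :=
  combined_majority_general X T hX hM hTM
end

section
/- Consider Bucklin voting on the candidate set {a,b,c} with weighted votes and a tie-breaking order T whose T-greatest element is c. Let P be a weighted profile (the non-manipulators) and let w_1,…,w_k be positive manipulator weights. If there exists a choice of manipulator votes v_1,…,v_k which, added to P with weights w_1,…,w_k, makes c the Bucklin winner, then the modified manipulator votes v′_1,…,v′_k, where v′_i is obtained from v_i by moving c to the first position while preserving the relative order of a and b, also make c the Bucklin winner. -/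
/-
Weighted voting on the three-candidate set {a, b, c}. A weighted profile is a
finite list of pairs (vote, weight), where a vote is a duplicate-free list of
all three candidates (earlier = more preferred) and the weight is a positive
natural number. `T` always denotes the tie-breaking (strict linear) order.
-/

inductive Cand : Type
  | a | b | c
  deriving DecidableEq

instance instFintypeCand : Fintype Cand :=
  ⟨{Cand.a, Cand.b, Cand.c}, fun x => by cases x <;> decide⟩

/-- A weighted profile: a list of (vote, weight) pairs. -/
abbrev WProfile := List (List Cand × ℕ)

/-- The total weight `n` of a weighted profile. -/
def totalW (P : WProfile) : ℕ := (P.map Prod.snd).sum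

/-- `N P x y`: the total weight of votes in `P` ranking `x` above `y`. -/
def Nw (P : WProfile) (x y : Cand) : ℕ :=
  ((P.filter fun p => p.1.idxOf x < p.1.idxOf y).map Prod.snd).sum

/-- The `k`-approval score of `e`: the total weight of votes ranking `e`
among the top `k` positions. -/
def kApproval (P : WProfile) (k : ℕ) (e : Cand) : ℕ :=
  ((P.filter fun p => p.1.idxOf e < k).map Prod.snd).sum

/-- The Bucklin score of `e`: the least `k` such that the `k`-approval score
of `e` is strictly greater than half the total weight. -/
noncomputable def bucklinScore (P : WProfile) (e : Cand) : ℕ :=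
  sInf {k | totalW P < 2 * kApproval P k e}

/-- `v` is a vote: a strict linear order of all three candidates. -/
def ValidVote (v : List Cand) : Prop := v.Nodup ∧ v.toFinset = Finset.univ

/-- A valid weighted profile: every vote is a linear order and every weight is
positive. -/
def ValidWProfile (P : WProfile) : Prop := ∀ p ∈ P, ValidVote p.1 ∧ 0 < p.2

/-- The `T`-greatest candidate among the maximisers of `f`. -/
def argmaxT (T : LinearOrder Cand) (f : Cand → ℕ) : Cand :=
  @Finset.max' Cand T (Finset.univ.filter fun e => ∀ z, f z ≤ f e) (by
    obtain ⟨w, hw, hm⟩ := Finset.exists_max_image Finset.univ f ⟨Cand.a, Finset.mem_univ _⟩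
    exact ⟨w, Finset.mem_filter.2 ⟨Finset.mem_univ _, fun z => hm z (Finset.mem_univ _)⟩⟩)

/-- The `T`-greatest candidate among the minimisers of `f`. -/
def argminT (T : LinearOrder Cand) (f : Cand → ℕ) : Cand :=
  @Finset.max' Cand T (Finset.univ.filter fun e => ∀ z, f e ≤ f z) (by
    obtain ⟨w, hw, hm⟩ := Finset.exists_min_image Finset.univ f ⟨Cand.a, Finset.mem_univ _⟩
    exact ⟨w, Finset.mem_filter.2 ⟨Finset.mem_univ _, fun z => hm z (Finset.mem_univ _)⟩⟩)

/-- The plurality score of `e`: the total weight of votes ranking `e` first. -/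
def pluralityScore (P : WProfile) (e : Cand) : ℕ :=
  ((P.filter fun p => p.1.head? = some e).map Prod.snd).sum

/-- The plurality winner. -/
def pluralityWinner (T : LinearOrder Cand) (P : WProfile) : Cand :=
  argmaxT T (pluralityScore P)

/-- The Copeland score of `x`: the number of candidates `z ≠ x` with
`N(x,z) > N(z,x)`. -/
def copelandScore (P : WProfile) (x : Cand) : ℕ :=
  (Finset.univ.filter fun z => z ≠ x ∧ Nw P z x < Nw P x z).card

/-- The Copeland winner. -/
def copelandWinner (T : LinearOrder Cand) (P : WProfile) : Cand :=
  argmaxT T (copelandScore P)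

/-- The maximin score of `x`: the minimum of `N(x,z)` over `z ≠ x`. -/
def maximinScore (P : WProfile) (x : Cand) : ℕ :=
  (((Finset.univ : Finset Cand).erase x).image fun z => Nw P x z).min' (by
    apply Finset.Nonempty.image
    cases x <;> decide)

/-- The maximin winner. -/
def maximinWinner (T : LinearOrder Cand) (P : WProfile) : Cand :=
  argmaxT T (maximinScore P)

/-- The Bucklin winner: the `T`-greatest candidate of minimal Bucklin score. -/
noncomputable def bucklinWinner (T : LinearOrder Cand) (P : WProfile) : Cand :=
  argminT T (bucklinScore P)

/-- Winner of the pairwise contest between `x` and `z` (the `T`-greater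
candidate winning on a tie). -/
def pairWin (T : LinearOrder Cand) (P : WProfile) (x z : Cand) : Cand :=
  if Nw P z x < Nw P x z then x
  else if Nw P x z < Nw P z x then z
  else if T.lt x z then z else x

/-- The candidate other than the two (distinct) given ones. -/
def third (x y : Cand) : Cand :=
  if Cand.a ≠ x ∧ Cand.a ≠ y then Cand.a
  else if Cand.b ≠ x ∧ Cand.b ≠ y then Cand.b
  else Cand.c

/-- The cup winner for the agenda in which `p` and `q` meet first and the
winner then meets the remaining candidate. -/
def cupWinner (T : LinearOrder Cand) (p q : Cand) (P : WProfile) : Cand :=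
  pairWin T P (pairWin T P p q) (third p q)

/-- Run-off combination `X + Y`: the common winner if `X` and `Y` agree;
otherwise the pairwise-majority winner between the two winners, with the
`T`-greater candidate winning a tied run-off. -/
def runoffWinner (T : LinearOrder Cand) (X Y : WProfile → Cand) (P : WProfile) : Cand :=
  let x := X P
  let y := Y P
  if x = y then x
  else if Nw P y x < Nw P x y then x
  else if Nw P x y < Nw P y x then y
  else if T.lt x y then y else x

/-!
Moving `c` to the top of a manipulator's vote never lowers the `k`-approval score of `c` and,
since the relative order of `a` and `b` is kept, never raises that of `a` or `b`; the total
weight is unchanged. Hence the Bucklin score of `c` can only drop and those of `a` and `b` can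
only rise, so `c` still has minimal score and, being `T`-greatest, is still the winner.
-/
lemma List.sum_snd_filter_le_of_imp {β : Type*} {L : List (β × ℕ)} {p q : β × ℕ → Bool}
    (h : ∀ x ∈ L, p x → q x) :
    ((L.filter p).map Prod.snd).sum ≤ ((L.filter q).map Prod.snd).sum := by
  induction L with
  | nil => rfl
  | cons x L ih =>
    have hL := ih fun y hy => h y (List.mem_cons_of_mem _ hy)
    by_cases hq : q x
    · by_cases hp : p x <;> simp [hp, hq] at hL ⊢ <;> omega
    · have hp : p x = false := by simpa [hq] using mt (h x List.mem_cons_self)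
      simpa [hp, hq] using hL

def moveToTop {α : Type*} [DecidableEq α] (x : α) (v : List α) : List α :=
  x :: v.filter (· ≠ x)

section moveToTop

variable {α : Type*} [DecidableEq α]

lemma idxOf_moveToTop_self (x : α) (v : List α) : (moveToTop x v).idxOf x = 0 :=
  List.idxOf_cons_self

lemma idxOf_le_idxOf_moveToTop {x z : α} {v : List α} (hv : v.Nodup) (hz : z ≠ x) :
    v.idxOf z ≤ (moveToTop x v).idxOf z := by
  rw [moveToTop, List.idxOf_cons_ne _ hz.symm]
  induction v with
  | nil => simp
  | cons y t ih =>
    obtain ⟨hyt, ht⟩ := List.nodup_cons.1 hv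
    by_cases hyz : y = z
    · simp [hyz]
    rw [List.idxOf_cons_ne _ hyz]
    by_cases hyx : y = x
    · subst hyx
      have hfilter : t.filter (· ≠ y) = t :=
        List.filter_eq_self.2 fun a ha => decide_eq_true fun hay => hyt (hay ▸ ha)
      rw [List.filter_cons_of_neg (by simp), hfilter]
    · rw [List.filter_cons_of_pos (by simpa using hyx), List.idxOf_cons_ne _ hyz]
      have := ih ht
      omega

end moveToTop

lemma ValidVote.idxOf_lt {v : List Cand} (hv : ValidVote v) (e : Cand) : v.idxOf e < 3 := by
  have he : e ∈ v := by simp [← List.mem_toFinset, hv.2]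
  have hlen : v.length ≤ 3 := hv.1.length_le_card
  have := List.idxOf_lt_length_iff.2 he
  omega

lemma ValidVote.moveToTop {v : List Cand} (hv : ValidVote v) (x : Cand) :
    ValidVote (moveToTop x v) := by
  refine ⟨List.nodup_cons.2 ⟨by simp, hv.1.filter _⟩, Finset.eq_univ_iff_forall.2 fun y => ?_⟩
  have hy : y ∈ v := by simp [← List.mem_toFinset, hv.2]
  by_cases hyx : y = x <;> simp [_root_.moveToTop, hyx, hy]

lemma totalW_append (P L : WProfile) : totalW (P ++ L) = totalW P + totalW L := by
  simp [totalW]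

lemma kApproval_append (P L : WProfile) (k : ℕ) (e : Cand) :
    kApproval (P ++ L) k e = kApproval P k e + kApproval L k e := by
  simp [kApproval]

lemma kApproval_le_totalW (P : WProfile) (k : ℕ) (e : Cand) : kApproval P k e ≤ totalW P := by
  simpa [kApproval, totalW] using
    List.sum_snd_filter_le_of_imp (L := P) (p := fun p => p.1.idxOf e < k) (q := fun _ => true)
      (by simp)

lemma kApproval_eq_totalW_of_validVote {P : WProfile} (hP : ∀ p ∈ P, ValidVote p.1) (e : Cand) :
    kApproval P 3 e = totalW P := by
  rw [kApproval, totalW, List.filter_eq_self.2 fun p hp => decide_eq_true ((hP p hp).idxOf_lt e)]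

lemma totalW_map_fst (f : List Cand → List Cand) (L : WProfile) :
    totalW (L.map (Prod.map f id)) = totalW L := by
  simp [totalW, Function.comp_def]

lemma kApproval_map_fst_le {f g : List Cand → List Cand} {L : WProfile} {e : Cand}
    (h : ∀ p ∈ L, (g p.1).idxOf e ≤ (f p.1).idxOf e) (k : ℕ) :
    kApproval (L.map (Prod.map f id)) k e ≤ kApproval (L.map (Prod.map g id)) k e := by
  simp only [kApproval, List.filter_map, List.map_map]
  exact List.sum_snd_filter_le_of_imp fun p hp hf => by
    simp only [Function.comp_apply, Prod.map_fst, decide_eq_true_eq] at hf ⊢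
    exact (h p hp).trans_lt hf

lemma kApproval_le_kApproval_map_moveToTop (L : WProfile) (k : ℕ) (x : Cand) :
    kApproval L k x ≤ kApproval (L.map (Prod.map (moveToTop x) id)) k x := by
  simpa using kApproval_map_fst_le (f := id) (g := moveToTop x)
    (fun p _ => by simp [idxOf_moveToTop_self]) k

lemma kApproval_map_moveToTop_le {L : WProfile} (hL : ∀ p ∈ L, p.1.Nodup) {x z : Cand}
    (hz : z ≠ x) (k : ℕ) :
    kApproval (L.map (Prod.map (moveToTop x) id)) k z ≤ kApproval L k z := by
  simpa using kApproval_map_fst_le (f := moveToTop x) (g := id)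
    (fun p hp => idxOf_le_idxOf_moveToTop (hL p hp) hz) k

lemma bucklinScore_le_of_kApproval_le {Q Q' : WProfile} {e e' : Cand}
    (hn : totalW Q' ≤ totalW Q) (h : ∀ k, kApproval Q k e ≤ kApproval Q' k e')
    (hQ : ∃ k, totalW Q < 2 * kApproval Q k e) :
    bucklinScore Q' e' ≤ bucklinScore Q e := by
  have hmem : totalW Q < 2 * kApproval Q (bucklinScore Q e) e := Nat.sInf_mem hQ
  have := h (bucklinScore Q e)
  exact Nat.sInf_le (show totalW Q' < 2 * kApproval Q' (bucklinScore Q e) e' by omega)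

lemma exists_totalW_lt_two_mul_kApproval {Q : WProfile} (hQ : ∀ p ∈ Q, ValidVote p.1)
    (hpos : 0 < totalW Q) (e : Cand) : ∃ k, totalW Q < 2 * kApproval Q k e :=
  ⟨3, by rw [kApproval_eq_totalW_of_validVote hQ]; omega⟩

lemma bucklinScore_eq_zero_of_totalW_eq_zero {Q : WProfile} (hQ : totalW Q = 0) (e : Cand) :
    bucklinScore Q e = 0 := by
  refine Nat.sInf_eq_zero.2 (Or.inr (Set.eq_empty_of_forall_notMem fun k hk => ?_))
  have hk : totalW Q < 2 * kApproval Q k e := hk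
  have := kApproval_le_totalW Q k e
  omega

lemma bucklinScore_append_map_moveToTop_le {P L : WProfile} (hPL : ∀ p ∈ P ++ L, ValidVote p.1)
    {x : Cand} (hx : ∀ z, bucklinScore (P ++ L) x ≤ bucklinScore (P ++ L) z) (z : Cand) :
    bucklinScore (P ++ L.map (Prod.map (moveToTop x) id)) x ≤
      bucklinScore (P ++ L.map (Prod.map (moveToTop x) id)) z := by
  set L' := L.map (Prod.map (moveToTop x) id)
  have hn : totalW (P ++ L') = totalW (P ++ L) := by
    rw [totalW_append, totalW_append, totalW_map_fst]
  have hPL' : ∀ p ∈ P ++ L', ValidVote p.1 := by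
    simp only [L', List.mem_append, List.mem_map]
    rintro p (hp | ⟨q, hq, rfl⟩)
    exacts [hPL p (List.mem_append_left _ hp), (hPL q (List.mem_append_right _ hq)).moveToTop x]
  rcases Nat.eq_zero_or_pos (totalW (P ++ L)) with h0 | hpos
  · -- no threshold is ever reached, so every score is the junk value `sInf ∅ = 0`
    rw [bucklinScore_eq_zero_of_totalW_eq_zero (hn.trans h0)]
    exact Nat.zero_le _
  obtain rfl | hz := eq_or_ne z x
  · rfl
  calc bucklinScore (P ++ L') x ≤ bucklinScore (P ++ L) x :=
        bucklinScore_le_of_kApproval_le hn.le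
          (fun k => by
            rw [kApproval_append, kApproval_append]
            exact Nat.add_le_add_left (kApproval_le_kApproval_map_moveToTop L k x) _)
          (exists_totalW_lt_two_mul_kApproval hPL hpos x)
    _ ≤ bucklinScore (P ++ L) z := hx z
    _ ≤ bucklinScore (P ++ L') z :=
        bucklinScore_le_of_kApproval_le hn.ge
          (fun k => by
            rw [kApproval_append, kApproval_append]
            exact Nat.add_le_add_left (kApproval_map_moveToTop_le
              (fun p hp => (hPL p (List.mem_append_right _ hp)).1) hz k) _)
          (exists_totalW_lt_two_mul_kApproval hPL' (hn ▸ hpos) z)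

lemma argminT_eq_iff {T : LinearOrder Cand} {m : Cand} (hm : ∀ x, T.le x m) (f : Cand → ℕ) :
    argminT T f = m ↔ ∀ z, f m ≤ f z := by
  let _ := T
  constructor
  · rintro rfl
    have hmem : argminT T f ∈ Finset.univ.filter fun e => ∀ z, f e ≤ f z := Finset.max'_mem _ _
    exact (Finset.mem_filter.1 hmem).2
  · intro h
    exact le_antisymm (hm _) (Finset.le_max' _ _ (Finset.mem_filter.2 ⟨Finset.mem_univ _, h⟩))

theorem bucklin_move_c_first_general
    (T : LinearOrder Cand) (hT : ∀ x : Cand, T.le x Cand.c)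
    (P : WProfile) (hP : ValidWProfile P)
    (k : ℕ) (w : Fin k → ℕ)
    (v : Fin k → List Cand) (hv : ∀ i, ValidVote (v i))
    (hwin : bucklinWinner T (P ++ List.ofFn fun i => (v i, w i)) = Cand.c) :
    bucklinWinner T
      (P ++ List.ofFn fun i => (Cand.c :: (v i).filter (fun x => x ≠ Cand.c), w i))
      = Cand.c := by
  have hvalid : ∀ p ∈ P ++ List.ofFn (fun i => (v i, w i)), ValidVote p.1 := by
    simp only [List.mem_append, List.mem_ofFn]
    rintro p (hp | ⟨i, rfl⟩)
    exacts [(hP p hp).1, hv i]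
  rw [bucklinWinner, argminT_eq_iff hT] at hwin ⊢
  have hmoved := bucklinScore_append_map_moveToTop_le hvalid hwin
  rwa [List.map_ofFn] at hmoved

/-- For Bucklin voting with weighted votes on 3 candidates and tie-breaking
order `T` whose `T`-greatest element is `c`: if some manipulator votes
`v₁, …, v_k` (with positive weights `w₁, …, w_k`) added to the profile `P`
make `c` the Bucklin winner, then so do the votes obtained by moving `c` to
the first position of each `vᵢ` while preserving the relative order of `a`
and `b`. -/
theorem bucklin_move_c_first
    (T : LinearOrder Cand) (hT : ∀ x : Cand, T.le x Cand.c)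
    (P : WProfile) (hP : ValidWProfile P)
    (k : ℕ) (w : Fin k → ℕ) (hw : ∀ i, 0 < w i)
    (v : Fin k → List Cand) (hv : ∀ i, ValidVote (v i))
    (hwin : bucklinWinner T (P ++ List.ofFn fun i => (v i, w i)) = Cand.c) :
    bucklinWinner T
      (P ++ List.ofFn fun i => (Cand.c :: (v i).filter (fun x => x ≠ Cand.c), w i))
      = Cand.c :=
  bucklin_move_c_first_general T hT P hP k w v hv hwin
end
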